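/- arXiv:1807.11518 — 2 statements merged into one kernel-verified Lean document; each statement's English description precedes it below -/
import Mathlib

section
/- Let $G$ be a graph, let $u, v$ be two vertices of $G$, and let $H$ be obtained from $G$ by adding $2d+2$ new vertices each adjacent exactly to $u$ and $v$, where the new vertices each have capacity $1$. Then in any minimum-size vertex set $K$ whose deletion admits an orientation respecting all capacities (new vertices have in-degree at most 1, original vertices at most their original capacity at most $d$), $K$ contains $u$ or $v$. -/
open SimpleGraph

/-- The in-degree of `v` under the orientation determined by `head`,
which assigns to each edge the endpoint it points to. -/
noncomputable def inDeg {V : Type*} (G : SimpleGraph V) (head : Sym2 V → V) (v : V) : ℕ :=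
  {e ∈ G.edgeSet | head e = v}.ncard

/-- `head` is an orientation of `G`: each edge points to one of its endpoints. -/
def IsOrientation {V : Type*} (G : SimpleGraph V) (head : Sym2 V → V) : Prop :=
  ∀ e ∈ G.edgeSet, head e ∈ e

/-- `G` is `d`-orientable: some orientation has all in-degrees at most `d`. -/
def IsDOrientable {V : Type*} (G : SimpleGraph V) (d : ℕ) : Prop :=
  ∃ head : Sym2 V → V, IsOrientation G head ∧ ∀ v, inDeg G head v ≤ d

/-- Orientability respecting a vertex capacity function. -/
def CapOrientable {V : Type*} (G : SimpleGraph V) (cap : V → ℕ) : Prop :=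
  ∃ head : Sym2 V → V, IsOrientation G head ∧ ∀ v, inDeg G head v ≤ cap v

/-!
If a minimum feasible deletion set `K` avoided both `u` and `v`, every surviving gadget vertex,
having capacity 1 and two edges, would have to orient one of them into `u` or `v`. Hence at most
`c(u) + c(v) ≤ 2d` gadget vertices survive, and `K` contains at least two of them. Replacing all
gadget vertices of `K` by the single vertex `u` then gives a strictly smaller feasible set: each
gadget vertex is left with `v` as its only neighbour and absorbs that edge, while the remaining
edges keep the orientation inherited from `K`.
-/

open Set

section

variable {V W : Type*} {G : SimpleGraph V}

theorem ncard_le_inDeg [Finite V] {head : Sym2 V → V} {a : V} {S : Set V}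
    (hS : ∀ q ∈ S, G.Adj q a ∧ head s(q, a) = a) : S.ncard ≤ inDeg G head a :=
  ncard_le_ncard_of_injOn (fun q => s(q, a)) hS (fun _ _ _ _ h => Sym2.congr_left.1 h)

theorem IsOrientation.head_eq_or_head_eq [Finite V] {head : Sym2 V → V}
    (horient : IsOrientation G head) {q a b : V} (hab : a ≠ b) (ha : G.Adj q a) (hb : G.Adj q b)
    (hq : inDeg G head q ≤ 1) : head s(q, a) = a ∨ head s(q, b) = b := by
  by_contra! h
  have into_q : ∀ {c}, G.Adj q c → head s(q, c) ≠ c → head s(q, c) = q := fun hc hne =>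
    (Sym2.mem_iff.1 (horient _ hc)).resolve_right hne
  have hpair : {s(q, a), s(q, b)} ⊆ {e ∈ G.edgeSet | head e = q} := by
    rintro e (rfl | rfl)
    exacts [⟨ha, into_q ha h.1⟩, ⟨hb, into_q hb h.2⟩]
  have := (ncard_pair (Sym2.congr_right.not.2 hab)).symm.trans_le (ncard_le_ncard hpair)
  unfold inDeg at hq
  omega

namespace CapOrientable

variable {cap : V → ℕ}

theorem comap [Finite W] {G' : SimpleGraph W} {cap' : W → ℕ} (h : CapOrientable G' cap')
    (f : G →g G') (hf : Function.Injective f) (hcap : ∀ x, cap' (f x) ≤ cap x) :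
    CapOrientable G cap := by
  classical
  obtain ⟨head', horient, hdeg⟩ := h
  let head : Sym2 V → V := fun e =>
    if h : ∃ x ∈ e, f x = head' (e.map f) then h.choose else e.out.1
  have head_spec : ∀ e ∈ G.edgeSet, head e ∈ e ∧ f (head e) = head' (e.map f) := by
    intro e he
    have hex : ∃ x ∈ e, f x = head' (e.map f) :=
      Sym2.mem_map.1 (horient _ (f.map_mem_edgeSet he))
    simp only [head, dif_pos hex]
    exact hex.choose_spec
  refine ⟨head, fun e he => (head_spec e he).1, fun x => ?_⟩
  calc inDeg G head x ≤ inDeg G' head' (f x) :=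
        ncard_le_ncard_of_injOn (Sym2.map f)
          (fun e ⟨he, hx⟩ => ⟨f.map_mem_edgeSet he, hx ▸ (head_spec e he).2.symm⟩)
          (Sym2.map.injective hf).injOn
    _ ≤ cap' (f x) := hdeg (f x)
    _ ≤ cap x := hcap x

theorem of_induce_compl [Finite V] {P : Set V} (h : CapOrientable (G.induce Pᶜ) fun x => cap x)
    (hP : ∀ p ∈ P, (G.neighborSet p).ncard ≤ cap p) : CapOrientable G cap := by
  classical
  obtain ⟨head₀, horient, hdeg⟩ := h
  let head : Sym2 V → V := fun e =>
    if h : ∃ p ∈ e, p ∈ P then h.choose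
    else head₀ (e.attachWith (P := (· ∈ Pᶜ)) fun a ha hp => h ⟨a, ha, hp⟩)
  have head_of_notMem : ∀ e (h : ¬∃ p ∈ e, p ∈ P),
      head e = head₀ (e.attachWith (P := (· ∈ Pᶜ)) fun a ha hp => h ⟨a, ha, hp⟩) :=
    fun e h => dif_neg h
  have attach_mem : ∀ e ∈ G.edgeSet, ∀ (h : ∀ a ∈ e, a ∈ Pᶜ),
      e.attachWith h ∈ (G.induce Pᶜ).edgeSet := by
    intro e he h
    rw [← (Embedding.induce Pᶜ).map_mem_edgeSet_iff]
    exact (Sym2.attachWith_map_subtypeVal h).symm ▸ he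
  have head_mem : ∀ e ∈ G.edgeSet, head e ∈ e := by
    intro e he
    by_cases h : ∃ p ∈ e, p ∈ P
    · simp only [head, dif_pos h]
      exact h.choose_spec.1
    · have hPc : ∀ a ∈ e, a ∈ Pᶜ := fun a ha hp => h ⟨a, ha, hp⟩
      have hmem : (head₀ (e.attachWith hPc) : V) ∈ (e.attachWith hPc).map Subtype.val :=
        Sym2.mem_map.2 ⟨_, horient _ (attach_mem e he hPc), rfl⟩
      rwa [Sym2.attachWith_map_subtypeVal, ← head_of_notMem e h] at hmem
  refine ⟨head, head_mem, fun x => ?_⟩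
  by_cases hx : x ∈ P
  · have hsub : {e ∈ G.edgeSet | head e = x} ⊆ (fun y => s(x, y)) '' G.neighborSet x := by
      rintro e ⟨he, hex⟩
      obtain ⟨y, rfl⟩ := Sym2.mem_iff_exists.1 (hex ▸ head_mem e he)
      exact ⟨y, he, rfl⟩
    calc inDeg G head x ≤ ((fun y => s(x, y)) '' G.neighborSet x).ncard := ncard_le_ncard hsub
      _ ≤ (G.neighborSet x).ncard := ncard_image_le
      _ ≤ cap x := hP x hx
  · have hsub : {e ∈ G.edgeSet | head e = x} ⊆
        Sym2.map Subtype.val '' {e ∈ (G.induce Pᶜ).edgeSet | head₀ e = ⟨x, hx⟩} := by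
      rintro e ⟨he, rfl⟩
      have h : ¬∃ p ∈ e, p ∈ P := by
        rintro hP'
        simp only [head, dif_pos hP'] at hx
        exact hx hP'.choose_spec.2
      refine ⟨_, ⟨attach_mem e he _, Subtype.ext (head_of_notMem e h).symm⟩,
        Sym2.attachWith_map_subtypeVal _⟩
    calc inDeg G head x ≤ (Sym2.map Subtype.val ''
          {e ∈ (G.induce Pᶜ).edgeSet | head₀ e = ⟨x, hx⟩}).ncard := ncard_le_ncard hsub
      _ ≤ inDeg (G.induce Pᶜ) head₀ ⟨x, hx⟩ := ncard_image_le
      _ ≤ cap x := hdeg _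

theorem ncard_le_add [Finite V] (h : CapOrientable G cap) {a b : V} (hab : a ≠ b) {Q : Set V}
    (hQ : ∀ q ∈ Q, G.Adj q a ∧ G.Adj q b ∧ cap q ≤ 1) : Q.ncard ≤ cap a + cap b := by
  obtain ⟨head, horient, hdeg⟩ := h
  have hsplit : Q ⊆ {q | G.Adj q a ∧ head s(q, a) = a} ∪ {q | G.Adj q b ∧ head s(q, b) = b} := by
    intro q hq
    obtain ⟨hqa, hqb, hcap⟩ := hQ q hq
    rcases horient.head_eq_or_head_eq hab hqa hqb ((hdeg q).trans hcap) with h | h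
    · exact Or.inl ⟨hqa, h⟩
    · exact Or.inr ⟨hqb, h⟩
  calc Q.ncard ≤ _ := ncard_le_ncard hsplit
    _ ≤ _ := ncard_union_le _ _
    _ ≤ inDeg G head a + inDeg G head b :=
        add_le_add (ncard_le_inDeg fun _ hq => hq) (ncard_le_inDeg fun _ hq => hq)
    _ ≤ cap a + cap b := add_le_add (hdeg a) (hdeg b)

end CapOrientable

def orGadget (G : SimpleGraph V) (u v : V) (ι : Type*) : SimpleGraph (V ⊕ ι) :=
  SimpleGraph.fromRel fun a b =>
    (∃ x y, a = Sum.inl x ∧ b = Sum.inl y ∧ G.Adj x y) ∨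
    (∃ i : ι, a = Sum.inr i ∧ (b = Sum.inl u ∨ b = Sum.inl v))

def IsFeasibleDeletionSet (H : SimpleGraph W) (cap : W → ℕ) (K : Set W) : Prop :=
  CapOrientable (H.induce Kᶜ) fun w => cap w.1

section orGadget

variable {ι : Type*} {u v : V} {cap : V → ℕ} {K : Set (V ⊕ ι)}

theorem orGadget_adj_inr {i : ι} {w : V ⊕ ι} :
    (orGadget G u v ι).Adj (.inr i) w ↔ w = .inl u ∨ w = .inl v := by
  rcases w with x | j <;> simp [orGadget]

theorem IsFeasibleDeletionSet.ncard_range_inr_diff_le [Finite V] [Finite ι] (huv : u ≠ v)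
    (hK : IsFeasibleDeletionSet (orGadget G u v ι) (Sum.elim cap fun _ => 1) K)
    (hu : .inl u ∉ K) (hv : .inl v ∉ K) : (range .inr \ K).ncard ≤ cap u + cap v := by
  rw [← ncard_preimage_of_injective_subset_range Subtype.val_injective
    (fun w hw => ⟨⟨w, hw.2⟩, rfl⟩)]
  refine hK.ncard_le_add (a := ⟨.inl u, hu⟩) (b := ⟨.inl v, hv⟩) (by simpa using huv) ?_
  rintro ⟨_, -⟩ ⟨⟨i, rfl⟩, -⟩
  exact ⟨orGadget_adj_inr.2 (.inl rfl), orGadget_adj_inr.2 (.inr rfl), le_rfl⟩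

theorem IsFeasibleDeletionSet.diff_range_inr_union [Finite V] [Finite ι]
    (hK : IsFeasibleDeletionSet (orGadget G u v ι) (Sum.elim cap fun _ => 1) K) :
    IsFeasibleDeletionSet (orGadget G u v ι) (Sum.elim cap fun _ => 1)
      (K \ range .inr ∪ {.inl u}) := by
  set K' : Set (V ⊕ ι) := K \ range .inr ∪ {.inl u}
  refine CapOrientable.of_induce_compl (P := Subtype.val ⁻¹' range .inr) ?_ ?_
  · let f : ((orGadget G u v ι).induce K'ᶜ).induce (Subtype.val ⁻¹' range .inr)ᶜ →g
        (orGadget G u v ι).induce Kᶜ :=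
      { toFun := fun w => ⟨w.1.1, fun hw => w.1.2 (.inl ⟨hw, w.2⟩)⟩
        map_rel' := id }
    exact hK.comap f (fun w w' h => Subtype.ext <| Subtype.ext <| congrArg (·.1) h)
      fun _ => le_rfl
  · rintro p ⟨i, hi⟩
    have hnbr : ∀ w ∈ ((orGadget G u v ι).induce K'ᶜ).neighborSet p, w.1 = .inl v := by
      intro w hw
      rcases orGadget_adj_inr.1 (hi ▸ hw : (orGadget G u v ι).Adj (.inr i) w.1) with hu | hv
      · exact absurd (.inr hu) w.2
      · exact hv
    calc _ ≤ 1 := (ncard_le_one_iff (toFinite _)).2 fun ha hb =>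
          Subtype.ext ((hnbr _ ha).trans (hnbr _ hb).symm)
      _ = Sum.elim cap (fun _ => 1) p.1 := by rw [← hi]; rfl

theorem inl_mem_or_inl_mem_of_forall_ncard_le [Finite V] [Finite ι] (huv : u ≠ v)
    (hι : cap u + cap v + 2 ≤ Nat.card ι)
    (hK : IsFeasibleDeletionSet (orGadget G u v ι) (Sum.elim cap fun _ => 1) K)
    (hmin : ∀ K', IsFeasibleDeletionSet (orGadget G u v ι) (Sum.elim cap fun _ => 1) K' →
      K.ncard ≤ K'.ncard) :
    .inl u ∈ K ∨ .inl v ∈ K := by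
  by_contra! ⟨hu, hv⟩
  have hsurvivors := hK.ncard_range_inr_diff_le huv hu hv
  have hgadget := ncard_inter_add_ncard_sdiff_eq_ncard (range (Sum.inr : ι → V ⊕ ι)) K
  have hsplit := ncard_inter_add_ncard_sdiff_eq_ncard K (range (Sum.inr : ι → V ⊕ ι))
  have hswap := (hmin _ hK.diff_range_inr_union).trans (ncard_union_le _ _)
  rw [ncard_range_of_injective Sum.inr_injective, inter_comm] at hgadget
  rw [ncard_singleton] at hswap
  omega

end orGadget

end

/-- OR gadget: attaching `2d+2` capacity-`1` vertices adjacent exactly to `u` and `v`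
forces every minimum feasible deletion set to contain `u` or `v`. -/
theorem stmt13 {V : Type*} [Finite V] (d : ℕ) (G : SimpleGraph V) (u v : V)
    (huv : u ≠ v) (cap : V → ℕ) (hcap : ∀ x, cap x ≤ d)
    (H : SimpleGraph (V ⊕ Fin (2 * d + 2)))
    (hH : H = SimpleGraph.fromRel (fun a b =>
      (∃ x y, a = Sum.inl x ∧ b = Sum.inl y ∧ G.Adj x y) ∨
      (∃ i : Fin (2 * d + 2), a = Sum.inr i ∧ (b = Sum.inl u ∨ b = Sum.inl v))))
    (capH : V ⊕ Fin (2 * d + 2) → ℕ) (hcapH : capH = Sum.elim cap fun _ => 1)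
    (K : Set (V ⊕ Fin (2 * d + 2)))
    (hK : CapOrientable (H.induce Kᶜ) fun w => capH w.1)
    (hmin : ∀ K' : Set (V ⊕ Fin (2 * d + 2)),
      CapOrientable (H.induce K'ᶜ) (fun w => capH w.1) → K.ncard ≤ K'.ncard) :
    Sum.inl u ∈ K ∨ Sum.inl v ∈ K := by
  subst hH hcapH
  have hcard : cap u + cap v + 2 ≤ Nat.card (Fin (2 * d + 2)) := by
    rw [Nat.card_fin]
    linarith [hcap u, hcap v]
  exact inl_mem_or_inl_mem_of_forall_ncard_le huv hcard hK hmin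
end

section
/- A finite graph $G = (V,E)$ is $d$-orientable if and only if for every subset $S \subseteq V$, the number of edges of $G$ with both endpoints in $S$ is at most $d \cdot |S|$. -/
/-!
Necessity: the edges spanned by `S` all point into `S`, and each vertex of `S` receives at most
`d` of them. Sufficiency is Hall's theorem: match every edge to one of the `d` slots `(v, i)`,
`i : Fin d`, at one of its endpoints `v`. A family `s` of edges spans its set `W` of endpoints,
so the hypothesis gives `|s| ≤ d |W|`, the number of slots available to `s`. Orienting each
edge towards the vertex of its slot gives every vertex in-degree at most `d`.
-/

open SimpleGraph

open Finset

theorem Set.ncard_setOf_fst_eq_le_of_injective {α β γ : Type*} [Finite γ] {f : α → β × γ}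
    (hf : Function.Injective f) (b : β) : {a | (f a).1 = b}.ncard ≤ Nat.card γ := by
  rw [← Set.ncard_univ γ]
  refine Set.ncard_le_ncard_of_injOn (fun a => (f a).2) (fun _ _ => Set.mem_univ _) ?_
    Set.finite_univ
  intro a ha a' ha' h
  exact hf (Prod.ext (ha.trans ha'.symm) h)

namespace SimpleGraph

variable {V : Type*} (G : SimpleGraph V)

def spannedEdges (S : Set V) : Set (Sym2 V) := {e ∈ G.edgeSet | ∀ v ∈ e, v ∈ S}

theorem ncard_spannedEdges_le_of_inDeg_le [Finite V] {head : Sym2 V → V} {d : ℕ}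
    (hhead : IsOrientation G head) (hdeg : ∀ v, inDeg G head v ≤ d) (S : Set V) :
    (G.spannedEdges S).ncard ≤ d * S.ncard := by
  classical
  have hS := S.toFinite
  have hcover : G.spannedEdges S ⊆ ⋃ v ∈ hS.toFinset, {e ∈ G.edgeSet | head e = v} :=
    fun e he => Set.mem_biUnion (hS.mem_toFinset.2 (he.2 _ (hhead e he.1))) ⟨he.1, rfl⟩
  calc (G.spannedEdges S).ncard
      ≤ (⋃ v ∈ hS.toFinset, {e ∈ G.edgeSet | head e = v}).ncard :=
        Set.ncard_le_ncard hcover (Set.toFinite _)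
    _ ≤ ∑ v ∈ hS.toFinset, inDeg G head v := set_ncard_biUnion_le _ _
    _ ≤ ∑ _v ∈ hS.toFinset, d := sum_le_sum fun v _ => hdeg v
    _ = d * S.ncard := by rw [sum_const, smul_eq_mul, mul_comm, Set.ncard_eq_toFinset_card S hS]

theorem card_le_card_biUnion_slots [Finite V] [DecidableEq V] {d : ℕ}
    (h : ∀ S : Set V, (G.spannedEdges S).ncard ≤ d * S.ncard) (s : Finset G.edgeSet) :
    #s ≤ #(s.biUnion fun e => (e : Sym2 V).toFinset ×ˢ (univ : Finset (Fin d))) := by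
  set W := s.biUnion fun e => (e : Sym2 V).toFinset
  have hslots : (s.biUnion fun e => (e : Sym2 V).toFinset ×ˢ (univ : Finset (Fin d))) =
      W ×ˢ univ := by
    ext ⟨v, i⟩
    simp [W]
  have hspan (e : G.edgeSet) (he : e ∈ (s : Set G.edgeSet)) : (e : Sym2 V) ∈ G.spannedEdges W :=
    ⟨e.2, fun v hv => mem_biUnion.2 ⟨e, he, Sym2.mem_toFinset.2 hv⟩⟩
  calc #s = (s : Set G.edgeSet).ncard := (Set.ncard_coe_finset s).symm
    _ ≤ (G.spannedEdges W).ncard :=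
        Set.ncard_le_ncard_of_injOn _ hspan Subtype.val_injective.injOn (Set.toFinite _)
    _ ≤ d * #W := by simpa only [Set.ncard_coe_finset] using h W
    _ = #(s.biUnion fun e => (e : Sym2 V).toFinset ×ˢ (univ : Finset (Fin d))) := by
        rw [hslots, card_product, card_univ, Fintype.card_fin, mul_comm]

variable {G}

noncomputable def extendHead (head : G.edgeSet → V) : Sym2 V → V :=
  Function.extend (Subtype.val : G.edgeSet → Sym2 V) head fun e => e.out.1

theorem extendHead_coe (head : G.edgeSet → V) (e : G.edgeSet) :
    extendHead head e = head e :=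
  Subtype.val_injective.extend_apply _ _ e

theorem isOrientation_extendHead {head : G.edgeSet → V} (hhead : ∀ e : G.edgeSet, head e ∈ (e : Sym2 V)) :
    IsOrientation G (extendHead head) :=
  fun e he => (extendHead_coe head ⟨e, he⟩).symm ▸ hhead ⟨e, he⟩

theorem inDeg_extendHead (head : G.edgeSet → V) (v : V) :
    inDeg G (extendHead head) v = {e : G.edgeSet | head e = v}.ncard := by
  have : {e ∈ G.edgeSet | extendHead head e = v} = (↑) '' {e : G.edgeSet | head e = v} := by
    ext e
    constructor
    · rintro ⟨he, hv⟩
      exact ⟨⟨e, he⟩, (extendHead_coe head ⟨e, he⟩).symm.trans hv, rfl⟩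
    · rintro ⟨e, hv, rfl⟩
      exact ⟨e.2, (extendHead_coe head e).trans hv⟩
  rw [inDeg, this, Set.ncard_image_of_injective _ Subtype.val_injective]

theorem isDOrientable_of_ncard_spannedEdges_le [Finite V] {d : ℕ}
    (h : ∀ S : Set V, (G.spannedEdges S).ncard ≤ d * S.ncard) : IsDOrientable G d := by
  classical
  obtain ⟨slot, hslot_inj, hslot⟩ :=
    (all_card_le_biUnion_card_iff_exists_injective _).mp (G.card_le_card_biUnion_slots h)
  have hhead (e : G.edgeSet) : (slot e).1 ∈ (e : Sym2 V) :=
    Sym2.mem_toFinset.1 (mem_product.1 (hslot e)).1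
  refine ⟨extendHead fun e => (slot e).1, isOrientation_extendHead hhead, fun v => ?_⟩
  rw [inDeg_extendHead]
  simpa only [Nat.card_eq_fintype_card, Fintype.card_fin] using
    Set.ncard_setOf_fst_eq_le_of_injective hslot_inj v

end SimpleGraph

/-- Hakimi-type characterization: a finite graph is `d`-orientable iff every vertex
subset `S` spans at most `d · |S|` edges. -/
theorem stmt16 {V : Type*} [Finite V] (G : SimpleGraph V) (d : ℕ) :
    IsDOrientable G d ↔
      ∀ S : Set V, {e ∈ G.edgeSet | ∀ v ∈ e, v ∈ S}.ncard ≤ d * S.ncard := by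
  constructor
  · rintro ⟨head, hhead, hdeg⟩
    exact G.ncard_spannedEdges_le_of_inDeg_le hhead hdeg
  · exact isDOrientable_of_ncard_spannedEdges_le
end
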